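/- arXiv:2503.11417 — 3 statements merged into one kernel-verified Lean document; each statement's English description precedes it below -/
import Mathlib

section
/- The second derivative of α ↦ P(α/2, m/2) with respect to α equals ((α/2)^{m/2-2} / (4Γ(m/2))) · e^{-α/2} · (m/2 - α/2 - 1), for α > 0 and m > 0. -/
/-!
By the fundamental theorem of calculus, `∂ₓ P(x, s) = x^(s-1) e^(-x) / Γ(s)` for `x > 0`, the
integrand being integrable at `0` since `s > 0`; differentiating once more gives
`x^(s-2) e^(-x) (s - 1 - x) / Γ(s)`. Substituting `x = α/2` contributes a factor `(1/2)^2`.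
-/

open Real Set Topology

/-- Regularized lower incomplete gamma function. -/
noncomputable def P (x s : ℝ) : ℝ :=
  (Real.Gamma s)⁻¹ * ∫ t in (0:ℝ)..x, t ^ (s - 1) * Real.exp (-t)

theorem deriv_deriv_comp_mul_left {𝕜 E : Type*} [NontriviallyNormedField 𝕜]
    [NormedAddCommGroup E] [NormedSpace 𝕜 E] (c : 𝕜) (f : 𝕜 → E) (x : 𝕜) :
    deriv (deriv fun y => f (c * y)) x = (c * c) • deriv (deriv f) (c * x) := by
  have hderiv : (deriv fun y => f (c * y)) = fun y => c • deriv f (c * y) :=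
    funext (deriv_comp_mul_left c f)
  rw [hderiv, deriv_fun_const_smul_field, deriv_comp_mul_left, smul_smul]

section

variable {s x : ℝ}

theorem hasDerivAt_rpow_sub_one_mul_exp_neg (hx : 0 < x) :
    HasDerivAt (fun t => t ^ (s - 1) * exp (-t)) (x ^ (s - 2) * exp (-x) * (s - 1 - x)) x := by
  have hpow : x ^ (s - 1) = x ^ (s - 2) * x := by
    rw [← rpow_add_one hx.ne']
    ring_nf
  refine ((hasDerivAt_rpow_const (p := s - 1) (Or.inl hx.ne')).mul
    (hasDerivAt_neg x).exp).congr_deriv ?_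
  rw [hpow, show s - 1 - 1 = s - 2 by ring]
  ring

theorem hasDerivAt_integral_rpow_sub_one_mul_exp_neg (hs : 0 < s) (hx : 0 < x) :
    HasDerivAt (fun y => ∫ t in (0:ℝ)..y, t ^ (s - 1) * exp (-t)) (x ^ (s - 1) * exp (-x)) x := by
  have hcont : ContinuousOn (fun t : ℝ => t ^ (s - 1) * exp (-t)) (Ioi 0) := fun t ht =>
    ((continuousAt_rpow_const t _ (Or.inl (ht.ne'))).mul
      (continuous_neg.rexp.continuousAt)).continuousWithinAt
  refine intervalIntegral.integral_hasDerivAt_right ?_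
    (hcont.stronglyMeasurableAtFilter isOpen_Ioi x hx) (hcont.continuousAt (Ioi_mem_nhds hx))
  exact (intervalIntegral.intervalIntegrable_rpow' (by linarith)).mul_continuousOn
    continuous_neg.rexp.continuousOn

theorem hasDerivAt_P (hs : 0 < s) (hx : 0 < x) :
    HasDerivAt (fun y => P y s) ((Gamma s)⁻¹ * (x ^ (s - 1) * exp (-x))) x :=
  (hasDerivAt_integral_rpow_sub_one_mul_exp_neg hs hx).const_mul _

theorem deriv_deriv_P (hs : 0 < s) (hx : 0 < x) :
    deriv (deriv fun y => P y s) x = (Gamma s)⁻¹ * (x ^ (s - 2) * exp (-x) * (s - 1 - x)) := by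
  have hderiv :
      (deriv fun y => P y s) =ᶠ[𝓝 x] fun y => (Gamma s)⁻¹ * (y ^ (s - 1) * exp (-y)) := by
    filter_upwards [Ioi_mem_nhds hx] with y hy
    exact (hasDerivAt_P hs hy).deriv
  rw [hderiv.deriv_eq]
  exact ((hasDerivAt_rpow_sub_one_mul_exp_neg hx).const_mul _).deriv

end

theorem second_deriv_P_half (m α : ℝ) (hm : 0 < m) (hα : 0 < α) :
    deriv (deriv (fun a : ℝ => P (a / 2) (m / 2))) α =
      (α / 2) ^ (m / 2 - 2) / (4 * Real.Gamma (m / 2)) * Real.exp (-(α / 2)) *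
        (m / 2 - α / 2 - 1) := by
  have hhalf : (fun a : ℝ => P (a / 2) (m / 2)) = fun a => P (2⁻¹ * a) (m / 2) := by
    simp only [div_eq_inv_mul]
  rw [hhalf, deriv_deriv_comp_mul_left 2⁻¹ (fun y => P y (m / 2)),
    deriv_deriv_P (by positivity) (by positivity), smul_eq_mul, ← div_eq_inv_mul α 2]
  ring
end

section
/- Let m > 2 and let α(τ) = 2 P⁻¹(1 - 1/τ; m/2) for τ > 1. If τ̄ > 1 is such that P⁻¹(1 - 1/τ̄; m/2) ≤ m/2 - 1, then α is concave on the interval (1, τ̄]. -/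
theorem alpha_concave (m : ℝ) (hm : 2 < m) (Pinv : ℝ → ℝ)
    (hPinv : ∀ q ∈ Set.Ioo (0:ℝ) 1, 0 < Pinv q ∧ P (Pinv q) (m / 2) = q)
    (τbar : ℝ) (hτ : 1 < τbar)
    (hcond : Pinv (1 - 1 / τbar) ≤ m / 2 - 1) :
    ConcaveOn ℝ (Set.Ioc (1:ℝ) τbar) (fun τ : ℝ => 2 * Pinv (1 - 1 / τ)) := by
  set s : ℝ := m / 2 with hs_def
  have hs1 : 1 < s := by rw [hs_def]; linarith
  have hs0 : 0 < s := by linarith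
  set f : ℝ → ℝ := fun t => t ^ (s - 1) * Real.exp (-t) with hf_def
  have hf_cont : Continuous f := by
    apply Continuous.mul
    · exact continuous_iff_continuousAt.2 fun x =>
        Real.continuousAt_rpow_const x (s - 1) (Or.inr (by linarith))
    · exact Real.continuous_exp.comp continuous_neg
  have hf_int : ∀ a b : ℝ, IntervalIntegrable f MeasureTheory.volume a b :=
    fun a b => hf_cont.intervalIntegrable a b
  have hΓ : 0 < (Real.Gamma s)⁻¹ := inv_pos.2 (Real.Gamma_pos_of_pos hs0)
  have hP_eq : ∀ x : ℝ, P x s = (Real.Gamma s)⁻¹ * ∫ t in (0:ℝ)..x, f t := fun x => rfl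
  have hf_pos : ∀ t : ℝ, 0 < t → 0 < f t := fun t ht =>
    mul_pos (Real.rpow_pos_of_pos ht _) (Real.exp_pos _)
  -- strict monotonicity of P on [0, ∞)
  have hPmono : ∀ a b : ℝ, 0 ≤ a → a < b → P a s < P b s := by
    intro a b ha hab
    have h1 : 0 < ∫ t in a..b, f t :=
      intervalIntegral.intervalIntegral_pos_of_pos_on (hf_int a b)
        (fun x hx => hf_pos x (lt_of_le_of_lt ha hx.1)) hab
    have h2 : (∫ t in (0:ℝ)..b, f t) = (∫ t in (0:ℝ)..a, f t) + ∫ t in a..b, f t :=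
      (intervalIntegral.integral_add_adjacent_intervals (hf_int 0 a) (hf_int a b)).symm
    rw [hP_eq, hP_eq, h2]
    nlinarith
  -- monotonicity of f on (0, s-1]
  have hf_mono : ∀ a b : ℝ, 0 < a → a ≤ b → b ≤ s - 1 → f a ≤ f b := by
    intro a b ha hab hb
    have hb0 : 0 < b := lt_of_lt_of_le ha hab
    have hlog : Real.log a - Real.log b ≤ a / b - 1 := by
      have := Real.log_le_sub_one_of_pos (show (0:ℝ) < a / b by positivity)
      rwa [Real.log_div (ne_of_gt ha) (ne_of_gt hb0)] at this
    have h2 : b * (Real.log a - Real.log b) ≤ b * (a / b - 1) :=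
      mul_le_mul_of_nonneg_left hlog hb0.le
    have h3 : b * (a / b - 1) = a - b := by field_simp
    have h4 : 0 ≤ Real.log b - Real.log a := sub_nonneg.2 (Real.log_le_log ha hab)
    have h5 : b * (Real.log b - Real.log a) ≤ (s - 1) * (Real.log b - Real.log a) :=
      mul_le_mul_of_nonneg_right hb h4
    have key : b - a ≤ (s - 1) * (Real.log b - Real.log a) := by nlinarith
    have ea : f a = Real.exp (Real.log a * (s - 1) + -a) := by
      rw [hf_def]; simp only
      rw [Real.rpow_def_of_pos ha, ← Real.exp_add]
    have eb : f b = Real.exp (Real.log b * (s - 1) + -b) := by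
      rw [hf_def]; simp only
      rw [Real.rpow_def_of_pos hb0, ← Real.exp_add]
    rw [ea, eb]
    exact Real.exp_le_exp.2 (by nlinarith)
  -- P is convex on [0, s-1]
  have hP_hasDeriv : ∀ x : ℝ, HasDerivAt (fun u => P u s) ((Real.Gamma s)⁻¹ * f x) x := by
    intro x
    have hI : HasDerivAt (fun u => ∫ t in (0:ℝ)..u, f t) (f x) x :=
      intervalIntegral.integral_hasDerivAt_right (hf_int 0 x)
        (hf_cont.stronglyMeasurableAtFilter _ _) hf_cont.continuousAt
    exact hI.const_mul _
  have hP_convex : ConvexOn ℝ (Set.Icc 0 (s - 1)) (fun x => P x s) := by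
    apply MonotoneOn.convexOn_of_deriv (convex_Icc _ _)
    · exact (continuous_const.mul (intervalIntegral.continuous_primitive hf_int 0)).continuousOn
    · exact fun x _ => (hP_hasDeriv x).differentiableAt.differentiableWithinAt
    · intro x hx y hy hxy
      rw [interior_Icc] at hx hy
      rw [(hP_hasDeriv x).deriv, (hP_hasDeriv y).deriv]
      exact mul_le_mul_of_nonneg_left (hf_mono x y hx.1 hxy hy.2.le) hΓ.le
  -- monotonicity of Pinv
  have hPinv_mono : ∀ p q : ℝ, p ∈ Set.Ioo (0:ℝ) 1 → q ∈ Set.Ioo (0:ℝ) 1 → p ≤ q →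
      Pinv p ≤ Pinv q := by
    intro p q hp hq hpq
    by_contra h
    push_neg at h
    have h2 := hPmono (Pinv q) (Pinv p) (hPinv q hq).1.le h
    rw [(hPinv p hp).2, (hPinv q hq).2] at h2
    linarith
  have hτb0 : (0:ℝ) < τbar := by linarith
  have hqbar : (1 - 1 / τbar) ∈ Set.Ioo (0:ℝ) 1 := by
    constructor
    · have : 1 / τbar < 1 := by rw [div_lt_one hτb0]; linarith
      linarith
    · have : 0 < 1 / τbar := by positivity
      linarith
  have hbound : ∀ q : ℝ, q ∈ Set.Ioo (0:ℝ) 1 → q ≤ 1 - 1 / τbar → Pinv q ≤ s - 1 := by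
    intro q hq hq'
    have := hPinv_mono q (1 - 1 / τbar) hq hqbar hq'
    calc Pinv q ≤ Pinv (1 - 1 / τbar) := this
      _ ≤ s - 1 := by rw [hs_def]; linarith
  -- the main concavity argument
  refine ⟨convex_Ioc 1 τbar, ?_⟩
  rintro τ1 hτ1 τ2 hτ2 a b ha hb hab
  simp only [smul_eq_mul]
  have hτ1p : (0:ℝ) < τ1 := by linarith [hτ1.1]
  have hτ2p : (0:ℝ) < τ2 := by linarith [hτ2.1]
  set t : ℝ := a * τ1 + b * τ2 with ht_def
  have ht1 : 1 < t := by
    rcases ha.lt_or_eq with ha' | ha'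
    · have h1 : a * 1 < a * τ1 := by
        exact mul_lt_mul_of_pos_left hτ1.1 ha'
      have h2 : b * 1 ≤ b * τ2 := mul_le_mul_of_nonneg_left (le_of_lt hτ2.1) hb
      rw [ht_def]; nlinarith
    · have hb1 : b = 1 := by linarith
      rw [ht_def, ← ha', hb1]; simpa using hτ2.1
  have ht2 : t ≤ τbar := by
    have h1 : a * τ1 ≤ a * τbar := mul_le_mul_of_nonneg_left hτ1.2 ha
    have h2 : b * τ2 ≤ b * τbar := mul_le_mul_of_nonneg_left hτ2.2 hb
    rw [ht_def]; nlinarith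
  have htp : (0:ℝ) < t := by linarith
  -- the arguments of Pinv
  set q1 : ℝ := 1 - 1 / τ1 with hq1_def
  set q2 : ℝ := 1 - 1 / τ2 with hq2_def
  have hq1 : q1 ∈ Set.Ioo (0:ℝ) 1 := by
    constructor
    · have : 1 / τ1 < 1 := by rw [div_lt_one hτ1p]; exact hτ1.1
      rw [hq1_def]; linarith
    · have : 0 < 1 / τ1 := by positivity
      rw [hq1_def]; linarith
  have hq2 : q2 ∈ Set.Ioo (0:ℝ) 1 := by
    constructor
    · have : 1 / τ2 < 1 := by rw [div_lt_one hτ2p]; exact hτ2.1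
      rw [hq2_def]; linarith
    · have : 0 < 1 / τ2 := by positivity
      rw [hq2_def]; linarith
  have hqt : (1 - 1 / t) ∈ Set.Ioo (0:ℝ) 1 := by
    constructor
    · have : 1 / t < 1 := by rw [div_lt_one htp]; exact ht1
      linarith
    · have : 0 < 1 / t := by positivity
      linarith
  have hq1' : q1 ≤ 1 - 1 / τbar := by
    have : 1 / τbar ≤ 1 / τ1 := one_div_le_one_div_of_le hτ1p hτ1.2
    rw [hq1_def]; linarith
  have hq2' : q2 ≤ 1 - 1 / τbar := by
    have : 1 / τbar ≤ 1 / τ2 := one_div_le_one_div_of_le hτ2p hτ2.2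
    rw [hq2_def]; linarith
  have hqt' : 1 - 1 / t ≤ 1 - 1 / τbar := by
    have : 1 / τbar ≤ 1 / t := one_div_le_one_div_of_le htp ht2
    linarith
  -- concavity of τ ↦ 1 - 1/τ
  have hA : a * q1 + b * q2 ≤ 1 - 1 / t := by
    have h1 : 1 / t ≤ a / τ1 + b / τ2 := by
      rw [div_add_div _ _ (ne_of_gt hτ1p) (ne_of_gt hτ2p),
        div_le_div_iff₀ htp (by positivity)]
      have hb' : b = 1 - a := by linarith
      have key : (a * τ2 + τ1 * b) * (a * τ1 + b * τ2) - τ1 * τ2 = a * b * (τ1 - τ2) ^ 2 := by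
        rw [hb']; ring
      have hnn : 0 ≤ a * b * (τ1 - τ2) ^ 2 :=
        mul_nonneg (mul_nonneg ha hb) (sq_nonneg _)
      rw [ht_def]
      nlinarith [key, hnn]
    have h2 : a * q1 + b * q2 = (a + b) - (a / τ1 + b / τ2) := by
      rw [hq1_def, hq2_def]
      field_simp
      ring
    rw [h2, hab]
    linarith
  clear_value t q1 q2
  -- the combination a*q1 + b*q2 lies in (0,1)
  have hcombIoo : a * q1 + b * q2 ∈ Set.Ioo (0:ℝ) 1 := by
    constructor
    · have hminq : 0 < min q1 q2 := lt_min hq1.1 hq2.1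
      have l1 : a * min q1 q2 ≤ a * q1 := mul_le_mul_of_nonneg_left (min_le_left q1 q2) ha
      have l2 : b * min q1 q2 ≤ b * q2 := mul_le_mul_of_nonneg_left (min_le_right q1 q2) hb
      have e : a * min q1 q2 + b * min q1 q2 = (a + b) * min q1 q2 := by ring
      rw [hab, one_mul] at e
      linarith
    · exact lt_of_le_of_lt hA hqt.2
  -- positivity and bounds of Pinv values
  obtain ⟨hx1p, hx1e⟩ := hPinv q1 hq1
  obtain ⟨hx2p, hx2e⟩ := hPinv q2 hq2
  obtain ⟨hyp, hye⟩ := hPinv (a * q1 + b * q2) hcombIoo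
  have hx1b : Pinv q1 ≤ s - 1 := hbound q1 hq1 hq1'
  have hx2b : Pinv q2 ≤ s - 1 := hbound q2 hq2 hq2'
  -- convexity step
  have hconv := hP_convex.2 (Set.mem_Icc.2 ⟨hx1p.le, hx1b⟩)
    (Set.mem_Icc.2 ⟨hx2p.le, hx2b⟩) ha hb hab
  simp only [smul_eq_mul] at hconv
  rw [hx1e, hx2e] at hconv
  have hstep : a * Pinv q1 + b * Pinv q2 ≤ Pinv (a * q1 + b * q2) := by
    by_contra h
    push_neg at h
    have h2 := hPmono (Pinv (a * q1 + b * q2)) (a * Pinv q1 + b * Pinv q2) hyp.le h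
    rw [hye] at h2
    linarith
  have hD : Pinv (a * q1 + b * q2) ≤ Pinv (1 - 1 / t) :=
    hPinv_mono _ _ hcombIoo hqt hA
  linarith
end

section
/- For a nonnegative integer z and τ > 1, with α(τ) implicitly defined by 1/τ = e^{-α/2} Σ_{i=0}^{z} (α/2)^i/i!, the second derivative of α with respect to τ is negative if and only if z! < 2z·z!/α + 2τ·(α/2)^z·e^{-α/2}. -/
/-!
Differentiating the truncated exponential series telescopes:
`d/dy (e^{-y} ∑_{i ≤ z} y^i / i!) = -e^{-y} y^z / z!`. Implicit differentiation of
`chiSqTail z (α τ) = 1 / τ` then gives the closed form `α' = 2 z! e^{α/2} / (τ² (α/2)^z)`, and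
differentiating that once more yields
`α'' = (2 z! e^α / v²) (z! - 2τ e^{-α/2} (α/2)^z - z z! (α/2)⁻¹)` with `v = τ² (α/2)^z`,
whose sign is the sign of the bracket.
-/

open Real Finset Filter Topology
open scoped Nat

theorem hasDerivAt_exp_neg_mul_sum_pow_div_factorial (n : ℕ) (y : ℝ) :
    HasDerivAt (fun y => exp (-y) * ∑ i ∈ range (n + 1), y ^ i / i !)
      (-(exp (-y) * y ^ n / n !)) y := by
  have hexp : HasDerivAt (fun y => exp (-y)) (-exp (-y)) y := by
    simpa using (hasDerivAt_neg y).exp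
  induction n with
  | zero => simpa using hexp
  | succ n ih =>
    have hterm : HasDerivAt (fun y => exp (-y) * (y ^ (n + 1) / (n + 1)!))
        (-exp (-y) * (y ^ (n + 1) / (n + 1)!) + exp (-y) * ((n + 1 : ℕ) * y ^ n / (n + 1)!)) y :=
      hexp.fun_mul ((hasDerivAt_pow (n + 1) y).div_const _)
    simp_rw [sum_range_succ _ (n + 1), mul_add]
    refine (ih.add hterm).congr_deriv ?_
    rw [Nat.factorial_succ]
    push_cast
    field_simp
    ring

/-- The survival function `P(χ² > x)` of the chi-squared distribution with `2(z+1)` degrees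
of freedom. -/
noncomputable def chiSqTail (z : ℕ) (x : ℝ) : ℝ :=
  exp (-x / 2) * ∑ i ∈ range (z + 1), (x / 2) ^ i / i !

theorem hasDerivAt_chiSqTail (z : ℕ) (x : ℝ) :
    HasDerivAt (chiSqTail z) (-(exp (-x / 2) * (x / 2) ^ z / (2 * z !))) x := by
  have hcomp := (hasDerivAt_exp_neg_mul_sum_pow_div_factorial z (x / 2)).comp x
    ((hasDerivAt_id' x).div_const 2)
  have hfun : chiSqTail z = (fun y => exp (-y) * ∑ i ∈ range (z + 1), y ^ i / i !) ∘ (· / 2) := by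
    ext x; simp only [chiSqTail, Function.comp, neg_div]
  rw [hfun]
  refine hcomp.congr_deriv ?_
  rw [neg_div]
  ring

theorem deriv_eq_of_chiSqTail_comp_eq_inv {z : ℕ} {a : ℝ → ℝ} {t : ℝ}
    (h : ∀ᶠ s in 𝓝 t, chiSqTail z (a s) = 1 / s) (hd : DifferentiableAt ℝ a t) (ht : t ≠ 0) :
    deriv a t = 2 * z ! * exp (a t / 2) / (t ^ 2 * (a t / 2) ^ z) := by
  have hinv : HasDerivAt (fun s => 1 / s) (-(t ^ 2)⁻¹) t := by
    simpa only [one_div] using hasDerivAt_inv ht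
  have heq : -(exp (-a t / 2) * (a t / 2) ^ z / (2 * z !)) * deriv a t = -(t ^ 2)⁻¹ :=
    ((hasDerivAt_chiSqTail z (a t)).comp t hd.hasDerivAt).unique (hinv.congr_of_eventuallyEq h)
  have hpow : (a t / 2) ^ z ≠ 0 := by
    rintro hz
    simp [hz, ht] at heq
  rw [neg_div, exp_neg] at heq
  field_simp at heq
  rw [eq_div_iff (mul_ne_zero (pow_ne_zero 2 ht) hpow)]
  linear_combination -heq

theorem deriv_deriv_eq_of_chiSqTail_comp_eq_inv {z : ℕ} {a : ℝ → ℝ} {τ : ℝ}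
    (h : ∀ᶠ s in 𝓝 τ, chiSqTail z (a s) = 1 / s ∧ DifferentiableAt ℝ a s)
    (hτ : τ ≠ 0) (ha : a τ ≠ 0) :
    deriv (deriv a) τ = 2 * z ! * exp (a τ) / (τ ^ 2 * (a τ / 2) ^ z) ^ 2 *
      ((z ! : ℝ) - 2 * τ * exp (-a τ / 2) * (a τ / 2) ^ z - z * z ! * (a τ / 2)⁻¹) := by
  have hfd : deriv a =ᶠ[𝓝 τ] fun t => 2 * z ! * exp (a t / 2) / (t ^ 2 * (a t / 2) ^ z) := by
    filter_upwards [h.eventually_nhds, eventually_ne_nhds hτ] with s hs hs0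
    exact deriv_eq_of_chiSqTail_comp_eq_inv (hs.mono fun _ => And.left) hs.self_of_nhds.2 hs0
  have hd := (h.self_of_nhds.2.hasDerivAt).div_const 2
  have hpow : (a τ / 2) ^ z ≠ 0 := pow_ne_zero _ (by positivity)
  have hG : HasDerivAt (fun t => 2 * z ! * exp (a t / 2) / (t ^ 2 * (a t / 2) ^ z)) _ τ :=
    (hd.exp.const_mul (2 * z ! : ℝ)).div ((hasDerivAt_pow 2 τ).mul (hd.pow z))
    (mul_ne_zero (pow_ne_zero 2 hτ) hpow)
  have hpred : (z : ℝ) * (a τ / 2) ^ (z - 1) = z * (a τ / 2) ^ z * (a τ / 2)⁻¹ := by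
    cases z
    · simp
    · rw [Nat.add_sub_cancel, pow_succ]
      field_simp
  rw [hfd.deriv_eq, hG.deriv, hfd.eq_of_nhds, hpred, neg_div, exp_neg]
  have hexp_sq : exp (a τ) = exp (a τ / 2) ^ 2 := by rw [← exp_nat_mul]; ring_nf
  rw [hexp_sq]
  field_simp
  ring

theorem second_deriv_alpha_neg_iff (z : ℕ) (a : ℝ → ℝ)
    (ha : ∀ τ : ℝ, 1 < τ → 0 < a τ ∧
      1 / τ = Real.exp (-(a τ) / 2) * ∑ i ∈ Finset.range (z + 1), (a τ / 2) ^ i / (i.factorial : ℝ))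
    (hdiff : ∀ τ : ℝ, 1 < τ → DifferentiableAt ℝ a τ ∧ DifferentiableAt ℝ (deriv a) τ) :
    ∀ τ : ℝ, 1 < τ →
      (deriv (deriv a) τ < 0 ↔
        (z.factorial : ℝ) < 2 * z * (z.factorial : ℝ) / a τ +
          2 * τ * (a τ / 2) ^ z * Real.exp (-(a τ) / 2)) := by
  intro τ hτ
  have hτ0 : 0 < τ := one_pos.trans hτ
  have hA : 0 < a τ := (ha τ hτ).1
  have hnear : ∀ᶠ s in 𝓝 τ, chiSqTail z (a s) = 1 / s ∧ DifferentiableAt ℝ a s := by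
    filter_upwards [Ioi_mem_nhds hτ] with s hs
    exact ⟨(ha s hs).2.symm, (hdiff s hs).1⟩
  have hprefactor : 0 < 2 * z ! * exp (a τ) / (τ ^ 2 * (a τ / 2) ^ z) ^ 2 := by positivity
  have hzterm : (z : ℝ) * z ! * (a τ / 2)⁻¹ = 2 * z * z ! / a τ := by field_simp
  rw [deriv_deriv_eq_of_chiSqTail_comp_eq_inv hnear hτ0.ne' hA.ne', hzterm]
  constructor
  · intro h
    linarith [neg_of_mul_neg_right h hprefactor.le]
  · intro h
    exact mul_neg_of_pos_of_neg hprefactor (by linarith)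
end
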